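/- arXiv:2408.08269 — 6 statements merged into one kernel-verified Lean document; each statement's English description precedes it below -/
import Mathlib

section
/- Fix real s > 0 and δ ∈ (0,1). Then n · ∫_{n^{−δ}}^{∞} e^{−s(τ−1)} · τ^{s−1} · e^{n(ln(τ)+1−τ)} / √(2πn) dτ tends to 1 as n → ∞. -/
open Filter Real MeasureTheory


lemma gamma_prod_aux (s : ℝ) (hs : 0 < s) (n : ℕ) :
    Real.Gamma (s + n + 1) = Real.Gamma s * ∏ j ∈ Finset.range (n+1), (s + j) := by
  induction n with
  | zero => simp [Real.Gamma_add_one hs.ne']; ring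
  | succ n ih =>
    have h1 : (0:ℝ) < s + n + 1 := by positivity
    rw [Finset.prod_range_succ, ← mul_assoc, ← ih]
    push_cast
    rw [show s + ((n:ℝ) + 1) + 1 = (s + n + 1) + 1 by ring, Real.Gamma_add_one h1.ne']
    ring

lemma gammaSeq_pos (s : ℝ) (hs : 0 < s) {n : ℕ} (hn : 1 ≤ n) : 0 < Real.GammaSeq s n := by
  have hnR : (0:ℝ) < n := by exact_mod_cast hn
  have hP : 0 < ∏ j ∈ Finset.range (n+1), (s + (j:ℝ)) :=
    Finset.prod_pos fun j _ => by positivity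
  have hf : (0:ℝ) < (n.factorial : ℝ) := by exact_mod_cast n.factorial_pos
  exact div_pos (mul_pos (Real.rpow_pos_of_pos hnR s) hf) hP

lemma gamma_key (s : ℝ) (hs : 0 < s) {n : ℕ} (hn : 1 ≤ n) :
    Real.Gamma ((n:ℝ) + s) =
      Real.Gamma s * (n:ℝ)^s * n.factorial / (Real.GammaSeq s n * ((n:ℝ) + s)) := by
  have hnR : (0:ℝ) < n := by exact_mod_cast hn
  have hA : (0:ℝ) < (n:ℝ) + s := by positivity
  have hP : 0 < ∏ j ∈ Finset.range (n+1), (s + (j:ℝ)) :=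
    Finset.prod_pos fun j _ => by positivity
  have hG := gammaSeq_pos s hs hn
  have h2 : ((n:ℝ)+s) * Real.Gamma ((n:ℝ)+s)
      = Real.Gamma s * ∏ j ∈ Finset.range (n+1), (s + (j:ℝ)) := by
    rw [← Real.Gamma_add_one hA.ne', show (n:ℝ)+s+1 = s+(n:ℝ)+1 by ring,
      gamma_prod_aux s hs n]
  have h3 : Real.GammaSeq s n * ∏ j ∈ Finset.range (n+1), (s + (j:ℝ))
      = (n:ℝ)^s * n.factorial := by
    simp only [Real.GammaSeq]
    rw [div_mul_cancel₀ _ hP.ne']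
  rw [eq_div_iff (by positivity)]
  linear_combination Real.GammaSeq s n * h2 + Real.Gamma s * h3


lemma aux_M_tendsto (s : ℝ) (hs : 0 < s) :
    Tendsto (fun n : ℕ => (n:ℝ) *
      (Real.exp ((n:ℝ)+s) * ((1/((n:ℝ)+s))^((n:ℝ)+s) * Real.Gamma ((n:ℝ)+s)))
        / Real.sqrt (2*π*n)) atTop (nhds 1) := by
  have hπ : (0:ℝ) < π := pi_pos
  have hΓs : 0 < Real.Gamma s := Real.Gamma_pos_of_pos hs
  -- limit of the three factors
  have hP1 : Tendsto (fun n : ℕ => Stirling.stirlingSeq n / Real.sqrt π) atTop (nhds 1) := by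
    have := Stirling.tendsto_stirlingSeq_sqrt_pi.div_const (Real.sqrt π)
    rwa [div_self (by positivity : Real.sqrt π ≠ 0)] at this
  have hP2 : Tendsto (fun n : ℕ => Real.Gamma s / Real.GammaSeq s n) atTop (nhds 1) := by
    have := Tendsto.div (tendsto_const_nhds (x := Real.Gamma s)) (Real.GammaSeq_tendsto_Gamma s) hΓs.ne'
    rwa [div_self hΓs.ne'] at this
  have hbase : Tendsto (fun n : ℕ => 1 + s/(n:ℝ)) atTop (nhds 1) := by
    have := Tendsto.add (tendsto_const_nhds (x := (1:ℝ))) (tendsto_const_div_atTop_nhds_zero_nat s)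
    simpa using this
  have h1 : Tendsto (fun n : ℕ => (1+s/(n:ℝ))^((n:ℝ))) atTop (nhds (Real.exp s)) :=
    (tendsto_one_add_div_rpow_exp s).comp tendsto_natCast_atTop_atTop
  have h2 : Tendsto (fun n : ℕ => (1+s/(n:ℝ))^(s+1)) atTop (nhds 1) := by
    have := (Real.continuousAt_rpow_const 1 (s+1) (Or.inl one_ne_zero)).tendsto.comp hbase
    simpa [Function.comp_def] using this
  have hmul : Tendsto (fun n : ℕ => (1+s/(n:ℝ))^((n:ℝ)+s+1)) atTop (nhds (Real.exp s)) := by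
    have h3 := h1.mul h2
    rw [mul_one] at h3
    refine h3.congr' ?_
    filter_upwards [eventually_ge_atTop 1] with n hn
    have hnR : (0:ℝ) < n := by exact_mod_cast hn
    have hb : 0 < 1 + s/(n:ℝ) := by
      have : 0 ≤ s/(n:ℝ) := div_nonneg hs.le (Nat.cast_nonneg n)
      linarith
    rw [← Real.rpow_add hb]
    ring_nf
  have hP3 : Tendsto (fun n : ℕ => Real.exp s * ((1+s/(n:ℝ))^((n:ℝ)+s+1))⁻¹)
      atTop (nhds 1) := by
    have := Tendsto.mul (tendsto_const_nhds (x := Real.exp s)) (hmul.inv₀ (Real.exp_ne_zero s))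
    rwa [mul_inv_cancel₀ (Real.exp_ne_zero s)] at this
  have hprod := (hP1.mul hP2).mul hP3
  rw [mul_one, one_mul] at hprod
  refine hprod.congr' ?_
  filter_upwards [eventually_ge_atTop 1] with n hn
  have hnR : (0:ℝ) < n := by exact_mod_cast hn
  have hA : (0:ℝ) < (n:ℝ) + s := by positivity
  have hG := gammaSeq_pos s hs hn
  have hfactpos : (0:ℝ) < (n.factorial : ℝ) := by exact_mod_cast n.factorial_pos
  have hden : (0:ℝ) < Real.sqrt (2*(n:ℝ)) * (((n:ℝ))/Real.exp 1)^(n:ℕ) := by positivity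
  have hstirl : 0 < Stirling.stirlingSeq n := div_pos hfactpos hden
  have hfact : (n.factorial : ℝ)
      = Stirling.stirlingSeq n * (Real.sqrt (2*(n:ℝ)) * (((n:ℝ))/Real.exp 1)^(n:ℕ)) := by
    rw [Stirling.stirlingSeq, div_mul_cancel₀ _ hden.ne']
  have h1' : (1/((n:ℝ)+s))^((n:ℝ)+s) = (((n:ℝ)+s)^((n:ℝ)+s))⁻¹ := by
    rw [one_div, ← Real.inv_rpow hA.le]
  have h2' : (1 + s/(n:ℝ)) = ((n:ℝ)+s)/(n:ℝ) := by field_simp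
  have h3' : (((n:ℝ)+s)/(n:ℝ))^((n:ℝ)+s+1)
      = ((n:ℝ)+s)^((n:ℝ)+s+1) / ((n:ℝ))^((n:ℝ)+s+1) :=
    Real.div_rpow hA.le (Nat.cast_nonneg n) _
  have h4' : ((n:ℝ)+s)^((n:ℝ)+s+1) = ((n:ℝ)+s)^((n:ℝ)+s) * ((n:ℝ)+s) :=
    Real.rpow_add_one hA.ne' _
  have h5' : ((n:ℝ))^((n:ℝ)+s+1) = ((n:ℝ))^(n:ℕ) * ((n:ℝ))^s * (n:ℝ) := by
    rw [show (n:ℝ)+s+1 = (n:ℝ)+(s+1) by ring, Real.rpow_add hnR, Real.rpow_add hnR,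
      Real.rpow_one, Real.rpow_natCast, mul_assoc]
  have h6' : Real.sqrt (2*π*(n:ℝ)) = Real.sqrt π * Real.sqrt (2*(n:ℝ)) := by
    rw [show 2*π*(n:ℝ) = π*(2*(n:ℝ)) by ring, Real.sqrt_mul hπ.le]
  have h7' : (((n:ℝ))/Real.exp 1)^(n:ℕ) = ((n:ℝ))^(n:ℕ) / Real.exp (n:ℝ) := by
    rw [div_pow, ← Real.exp_one_pow]
  have h8' : Real.exp ((n:ℝ)+s) = Real.exp (n:ℝ) * Real.exp s := Real.exp_add _ _
  rw [gamma_key s hs hn, hfact, h1', h2', h3', h4', h5', h6', h7', h8']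
  have hXpos : (0:ℝ) < ((n:ℝ)+s)^((n:ℝ)+s) := Real.rpow_pos_of_pos hA _
  have hZpos : (0:ℝ) < ((n:ℝ))^s := Real.rpow_pos_of_pos hnR _
  have hsq2n : (0:ℝ) < Real.sqrt (2*(n:ℝ)) := by positivity
  have hsqπ : (0:ℝ) < Real.sqrt π := by positivity
  have hY : (0:ℝ) < ((n:ℝ))^(n:ℕ) := by positivity
  field_simp


lemma aux_E_tendsto (s δ : ℝ) (hs : 0 < s) (hδ0 : 0 < δ) :
    Tendsto (fun n : ℕ => (n:ℝ) *
      (Real.exp ((n:ℝ)+s) *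
        ∫ τ in Set.Ioc 0 ((n:ℝ)^(-δ)), τ^(((n:ℝ)+s)-1) * Real.exp (-(((n:ℝ)+s)*τ)))
        / Real.sqrt (2*π*n)) atTop (nhds 0) := by
  have hπ : (0:ℝ) < π := pi_pos
  -- the dominating sequence
  have hC : Tendsto (fun n : ℕ => Real.exp (s + (n:ℝ) * (2 - δ * Real.log n)))
      atTop (nhds 0) := by
    have hlog : Tendsto (fun n : ℕ => δ * Real.log n) atTop atTop :=
      (Real.tendsto_log_atTop.comp tendsto_natCast_atTop_atTop).const_mul_atTop hδ0
    have h1 : Tendsto (fun n : ℕ => 2 - δ * Real.log n) atTop atBot := by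
      have := tendsto_neg_atTop_atBot.comp hlog
      have h2 := tendsto_atBot_add_const_left atTop (2:ℝ) this
      simpa [sub_eq_add_neg] using h2
    have h3 : Tendsto (fun n : ℕ => (n:ℝ) * (2 - δ * Real.log n)) atTop atBot :=
      Tendsto.atTop_mul_atBot₀ tendsto_natCast_atTop_atTop h1
    have h4 := tendsto_atBot_add_const_left atTop s h3
    exact Real.tendsto_exp_atBot.comp h4
  refine squeeze_zero' ?_ ?_ hC
  · filter_upwards [eventually_ge_atTop 1] with n hn
    have hnR : (0:ℝ) < n := by exact_mod_cast hn
    have hA : (0:ℝ) < (n:ℝ) + s := by positivity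
    have hI : 0 ≤ ∫ τ in Set.Ioc 0 ((n:ℝ)^(-δ)), τ^(((n:ℝ)+s)-1) * Real.exp (-(((n:ℝ)+s)*τ)) := by
      apply setIntegral_nonneg measurableSet_Ioc
      intro τ hτ
      have := hτ.1
      positivity
    positivity
  · filter_upwards [eventually_ge_atTop 3] with n hn
    have hnR : (3:ℝ) ≤ n := by exact_mod_cast hn
    have hn0 : (0:ℝ) < n := by linarith
    have hn1 : (1:ℝ) ≤ n := by linarith
    have hA : (0:ℝ) < (n:ℝ) + s := by positivity
    set c : ℝ := (n:ℝ)^(-δ) with hc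
    have hc0 : 0 < c := Real.rpow_pos_of_pos hn0 _
    set A : ℝ := (n:ℝ) + s with hAdef
    -- bound the integral by ∫ τ^(A-1) = c^A/A
    have hint_f : IntegrableOn (fun τ : ℝ => τ^(A-1) * Real.exp (-(A*τ))) (Set.Ioc 0 c) := by
      have h0 := integrableOn_rpow_mul_exp_neg_mul_rpow (p := 1) (s := A-1) (b := A)
        (by linarith) one_pos hA
      have h1 : IntegrableOn (fun τ : ℝ => τ^(A-1) * Real.exp (-(A*τ))) (Set.Ioi 0) := by
        refine h0.congr_fun (fun x hx => ?_) measurableSet_Ioi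
        simp only [Real.rpow_one, neg_mul]
      exact h1.mono_set Set.Ioc_subset_Ioi_self
    have hint_g : IntegrableOn (fun τ : ℝ => τ^(A-1)) (Set.Ioc 0 c) :=
      (intervalIntegral.intervalIntegrable_rpow' (by linarith)).1
    have hmono : (∫ τ in Set.Ioc 0 c, τ^(A-1) * Real.exp (-(A*τ)))
        ≤ ∫ τ in Set.Ioc 0 c, τ^(A-1) := by
      apply setIntegral_mono_on hint_f hint_g measurableSet_Ioc
      intro τ hτ
      have hτ0 : 0 < τ := hτ.1
      have : Real.exp (-(A*τ)) ≤ 1 := by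
        rw [Real.exp_le_one_iff]
        nlinarith
      nlinarith [Real.rpow_nonneg hτ0.le (A-1)]
    have hval : (∫ τ in Set.Ioc 0 c, τ^(A-1)) = c^A / A := by
      rw [← intervalIntegral.integral_of_le hc0.le,
        integral_rpow (Or.inl (by linarith : (-1:ℝ) < A - 1)), sub_add_cancel,
        Real.zero_rpow hA.ne', sub_zero]
    -- the bound chain
    have hsq : (1:ℝ) ≤ Real.sqrt (2*π*n) := by
      rw [show (1:ℝ) = Real.sqrt 1 by simp]
      apply Real.sqrt_le_sqrt
      nlinarith [Real.pi_gt_three]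
    have hA1 : (1:ℝ) ≤ A := by simp only [hAdef]; linarith
    have hcA : c^A ≤ (n:ℝ)^(-(δ*(n:ℝ))) := by
      rw [hc, ← Real.rpow_mul hn0.le]
      apply Real.rpow_le_rpow_of_exponent_le hn1
      simp only [hAdef]
      nlinarith
    have hI0 : 0 ≤ ∫ τ in Set.Ioc 0 c, τ^(A-1) * Real.exp (-(A*τ)) := by
      apply setIntegral_nonneg measurableSet_Ioc
      intro τ hτ
      have := hτ.1
      positivity
    have h5 : (∫ τ in Set.Ioc 0 c, τ^(A-1) * Real.exp (-(A*τ))) ≤ (n:ℝ)^(-(δ*(n:ℝ))) := by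
      refine (hmono.trans ?_)
      rw [hval]
      exact (div_le_self (Real.rpow_nonneg hc0.le _) hA1).trans hcA
    have h6 : (n:ℝ) * (Real.exp A * ∫ τ in Set.Ioc 0 c, τ^(A-1) * Real.exp (-(A*τ)))
        / Real.sqrt (2*π*n) ≤ (n:ℝ) * (Real.exp A * (n:ℝ)^(-(δ*(n:ℝ)))) := by
      refine (div_le_self (by positivity) hsq).trans ?_
      have := mul_le_mul_of_nonneg_left h5 (Real.exp_pos A).le
      exact mul_le_mul_of_nonneg_left this hn0.le
    refine h6.trans ?_
    have h7 : (n:ℝ) * (Real.exp A * (n:ℝ)^(-(δ*(n:ℝ))))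
        = Real.exp (Real.log n + A + Real.log n * (-(δ*(n:ℝ)))) := by
      simp only [hAdef]
      conv_rhs => rw [Real.exp_add, Real.exp_add, Real.exp_log hn0, ← Real.rpow_def_of_pos hn0]
      ring
    rw [h7]
    apply Real.exp_le_exp.mpr
    simp only [hAdef]
    nlinarith [Real.log_le_sub_one_of_pos hn0]


theorem laplace_outer_integral_asymptotics (s δ : ℝ) (hs : 0 < s) (hδ0 : 0 < δ) (hδ1 : δ < 1) :
    Filter.Tendsto
      (fun n : ℕ =>
        (n : ℝ) *
          ∫ τ in Set.Ioi ((n : ℝ) ^ (-δ)),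
            Real.exp (-s * (τ - 1)) * τ ^ (s - 1) *
              Real.exp (n * (Real.log τ + 1 - τ)) / Real.sqrt (2 * π * n))
      Filter.atTop (nhds 1) := by
  have h := (aux_M_tendsto s hs).sub (aux_E_tendsto s δ hs hδ0)
  rw [sub_zero] at h
  refine h.congr' ?_
  filter_upwards [eventually_ge_atTop 1] with n hn
  have hnR : (0:ℝ) < n := by exact_mod_cast hn
  have hA : (0:ℝ) < (n:ℝ) + s := by positivity
  have hc0 : (0:ℝ) < (n:ℝ)^(-δ) := Real.rpow_pos_of_pos hnR _
  have hIntIoi0 : IntegrableOn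
      (fun τ : ℝ => τ^(((n:ℝ)+s)-1) * Real.exp (-(((n:ℝ)+s)*τ))) (Set.Ioi 0) := by
    have h0 := integrableOn_rpow_mul_exp_neg_mul_rpow (p := 1) (s := ((n:ℝ)+s)-1)
      (b := (n:ℝ)+s) (by linarith) one_pos hA
    refine h0.congr_fun (fun x hx => ?_) measurableSet_Ioi
    simp only [Real.rpow_one, neg_mul]
  have hIoc : IntegrableOn
      (fun τ : ℝ => τ^(((n:ℝ)+s)-1) * Real.exp (-(((n:ℝ)+s)*τ))) (Set.Ioc 0 ((n:ℝ)^(-δ))) :=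
    hIntIoi0.mono_set Set.Ioc_subset_Ioi_self
  have hIoi : IntegrableOn
      (fun τ : ℝ => τ^(((n:ℝ)+s)-1) * Real.exp (-(((n:ℝ)+s)*τ))) (Set.Ioi ((n:ℝ)^(-δ))) :=
    hIntIoi0.mono_set (Set.Ioi_subset_Ioi hc0.le)
  have hsplit : (1/((n:ℝ)+s))^((n:ℝ)+s) * Real.Gamma ((n:ℝ)+s)
      = (∫ τ in Set.Ioc 0 ((n:ℝ)^(-δ)), τ^(((n:ℝ)+s)-1) * Real.exp (-(((n:ℝ)+s)*τ)))
        + ∫ τ in Set.Ioi ((n:ℝ)^(-δ)), τ^(((n:ℝ)+s)-1) * Real.exp (-(((n:ℝ)+s)*τ)) := by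
    rw [← Real.integral_rpow_mul_exp_neg_mul_Ioi hA hA, ← Set.Ioc_union_Ioi_eq_Ioi hc0.le,
      setIntegral_union (Set.Ioc_disjoint_Ioi le_rfl) measurableSet_Ioi hIoc hIoi]
  have hcongr : ∀ τ ∈ Set.Ioi ((n:ℝ)^(-δ)),
      Real.exp (-s * (τ - 1)) * τ ^ (s - 1) *
        Real.exp (n * (Real.log τ + 1 - τ)) / Real.sqrt (2 * π * n)
      = Real.exp ((n:ℝ)+s) * (τ^(((n:ℝ)+s)-1) * Real.exp (-(((n:ℝ)+s)*τ)))
          / Real.sqrt (2 * π * n) := by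
    intro τ hτ
    have hτ0 : (0:ℝ) < τ := hc0.trans hτ
    have hnum : Real.exp (-s * (τ - 1)) * τ ^ (s - 1) * Real.exp (n * (Real.log τ + 1 - τ))
        = Real.exp ((n:ℝ)+s) * (τ^(((n:ℝ)+s)-1) * Real.exp (-(((n:ℝ)+s)*τ))) := by
      rw [Real.rpow_def_of_pos hτ0 (s-1), Real.rpow_def_of_pos hτ0 (((n:ℝ)+s)-1)]
      simp only [← Real.exp_add]
      congr 1
      ring
    rw [hnum]
  rw [setIntegral_congr_fun measurableSet_Ioi hcongr, integral_div, MeasureTheory.integral_const_mul _ _,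
    show (∫ τ in Set.Ioi ((n:ℝ)^(-δ)), τ^(((n:ℝ)+s)-1) * Real.exp (-(((n:ℝ)+s)*τ)))
      = (1/((n:ℝ)+s))^((n:ℝ)+s) * Real.Gamma ((n:ℝ)+s)
        - ∫ τ in Set.Ioc 0 ((n:ℝ)^(-δ)), τ^(((n:ℝ)+s)-1) * Real.exp (-(((n:ℝ)+s)*τ))
      by linarith]
  ring
end

section
/- Fix δ ∈ (0,1/3). For every sequence of positive reals (τ_n) with τ_n > n^{−δ} for all n, there exist sequences (a_n) and (b_n) of real, respectively complex, numbers with a_n → 0 and n·b_n → 0 such that for all n, ∫_{−π}^{π} e^{−in(θ−τ_n sin θ)} · e^{−2nτ_n sin²(θ/2)} dθ/(2π) = (e^{n(ln(τ_n)+1−τ_n)} / √(2πn))·(1 + a_n) + b_n. -/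
open Filter Real MeasureTheory Complex

lemma exp_ortho' (m : ℤ) (hm : m ≠ 0) :
    (∫ θ in (-π)..π, Complex.exp (Complex.I * m * θ)) = 0 := by
  have hc : (Complex.I * m : ℂ) ≠ 0 := by simp [Complex.I_ne_zero, hm]
  rw [show (∫ θ in (-π)..π, Complex.exp (Complex.I * m * θ))
      = ∫ θ in (-π)..π, Complex.exp ((Complex.I * m) * θ) from rfl,
    integral_exp_mul_complex hc]
  have key : Complex.exp (Complex.I * m * (π : ℝ)) - Complex.exp (Complex.I * m * ((-π : ℝ) : ℝ)) = 0 := by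
    have h1 : Complex.exp (Complex.I * m * (π : ℝ))
        = Complex.exp (Complex.I * m * ((-π : ℝ) : ℝ)) * Complex.exp ((m : ℂ) * (2 * π * Complex.I)) := by
      rw [← Complex.exp_add]; push_cast; ring_nf
    rw [h1, Complex.exp_int_mul_two_pi_mul_I, mul_one, sub_self]
  rw [key, zero_div]

lemma exp_series' (z : ℂ) (θ : ℝ) (n : ℕ) :
    Complex.exp (-Complex.I * n * θ) * Complex.exp (z * Complex.exp (Complex.I * θ))
      = ∑' k : ℕ, z ^ k / k.factorial * Complex.exp (Complex.I * ((k : ℂ) - n) * θ) := by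
  have h1 : Complex.exp (z * Complex.exp (Complex.I * θ))
      = ∑' k : ℕ, (z * Complex.exp (Complex.I * θ)) ^ k / k.factorial := by
    rw [Complex.exp_eq_exp_ℂ, NormedSpace.exp_eq_tsum_div]
  rw [h1, ← tsum_mul_left]
  congr 1; ext k
  rw [mul_pow, ← Complex.exp_nat_mul]
  rw [div_mul_eq_mul_div, mul_comm, div_mul_eq_mul_div, mul_assoc]
  rw [← Complex.exp_add]
  congr 2
  ring

lemma key_integral' (z : ℂ) (n : ℕ) :
    (∫ θ in (-π)..π, Complex.exp (-Complex.I * n * θ) * Complex.exp (z * Complex.exp (Complex.I * θ)))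
      = 2 * π * z ^ n / n.factorial := by
  have hle : (-π : ℝ) ≤ π := by linarith [Real.pi_pos]
  set F : ℕ → ℝ → ℂ := fun k θ => z ^ k / k.factorial * Complex.exp (Complex.I * ((k : ℂ) - n) * θ) with hF
  have hnorm : ∀ k (θ : ℝ), ‖F k θ‖ = ‖z‖ ^ k / k.factorial := by
    intro k θ
    have : ‖Complex.exp (Complex.I * ((k : ℂ) - n) * θ)‖ = 1 := by
      rw [Complex.norm_exp]
      have : (Complex.I * ((k : ℂ) - n) * (θ : ℂ)).re = 0 := by
        simp [Complex.mul_re, Complex.mul_im]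
      rw [this, Real.exp_zero]
    rw [hF]; simp only [norm_mul, this, mul_one, norm_div]
    simp
  have hmeas : ∀ k, AEStronglyMeasurable (F k) (volume.restrict (Set.Ioc (-π) π)) := by
    intro k
    exact (Continuous.aestronglyMeasurable (by fun_prop))
  have hsum : ∑' k, ∫⁻ θ in Set.Ioc (-π) π, ‖F k θ‖₊ ≠ ⊤ := by
    have hcalc : ∀ k, ∫⁻ θ in Set.Ioc (-π) π, (‖F k θ‖₊ : ENNReal)
        = ENNReal.ofReal (‖z‖ ^ k / k.factorial) * ENNReal.ofReal (2 * π) := by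
      intro k
      have : ∀ θ : ℝ, (‖F k θ‖₊ : ENNReal) = ENNReal.ofReal (‖z‖ ^ k / k.factorial) := by
        intro θ
        rw [← enorm_eq_nnnorm, ← ofReal_norm, hnorm k θ]
      simp only [this]
      rw [MeasureTheory.lintegral_const, Measure.restrict_apply_univ, Real.volume_Ioc]
      congr 1
      rw [show π - (-π) = 2 * π by ring]
    simp only [hcalc]
    rw [ENNReal.tsum_mul_right]
    apply ENNReal.mul_ne_top _ ENNReal.ofReal_ne_top
    have hs : Summable (fun k : ℕ => ‖z‖ ^ k / k.factorial) := by
      simpa using Real.summable_pow_div_factorial ‖z‖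
    rw [← ENNReal.ofReal_tsum_of_nonneg (fun k => by positivity) hs]
    exact ENNReal.ofReal_ne_top
  have hswap : (∫ θ in Set.Ioc (-π) π, ∑' k, F k θ) = ∑' k, ∫ θ in Set.Ioc (-π) π, F k θ :=
    MeasureTheory.integral_tsum hmeas hsum
  calc (∫ θ in (-π)..π, Complex.exp (-Complex.I * n * θ) * Complex.exp (z * Complex.exp (Complex.I * θ)))
      = ∫ θ in (-π)..π, ∑' k, F k θ := by
        apply intervalIntegral.integral_congr
        intro θ _
        exact exp_series' z θ n
    _ = ∫ θ in Set.Ioc (-π) π, ∑' k, F k θ := intervalIntegral.integral_of_le hle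
    _ = ∑' k, ∫ θ in Set.Ioc (-π) π, F k θ := hswap
    _ = ∑' k, ∫ θ in (-π)..π, F k θ := by
        congr 1; ext k; rw [intervalIntegral.integral_of_le hle]
    _ = 2 * π * z ^ n / n.factorial := by
        have hterm : ∀ k, (∫ θ in (-π)..π, F k θ)
            = if k = n then 2 * π * z ^ n / n.factorial else 0 := by
          intro k
          rw [hF]
          simp only
          rw [intervalIntegral.integral_const_mul]
          by_cases hk : k = n
          · subst hk
            simp only [sub_self, mul_zero, zero_mul, Complex.exp_zero, if_pos rfl]
            rw [intervalIntegral.integral_const]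
            rw [sub_neg_eq_add, Complex.real_smul]
            push_cast
            ring
          · rw [if_neg hk]
            have hm : ((k : ℤ) - n) ≠ 0 := by
              intro h
              apply hk
              exact_mod_cast sub_eq_zero.mp h
            have := exp_ortho' ((k : ℤ) - n) hm
            have hcast : ∀ θ : ℝ, Complex.I * (((k : ℤ) - (n : ℤ) : ℤ) : ℂ) * θ
                = Complex.I * ((k : ℂ) - n) * θ := by intro θ; push_cast; ring
            rw [show (fun θ : ℝ => Complex.exp (Complex.I * ((k:ℂ) - n) * θ))
                = fun θ : ℝ => Complex.exp (Complex.I * (((k : ℤ) - (n:ℤ) : ℤ) : ℂ) * θ) by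
              ext θ; rw [hcast]] at *
            rw [this, mul_zero]
        simp only [hterm]
        rw [tsum_ite_eq]

set_option maxHeartbeats 1000000 in
theorem saddle_point_inner_integral (δ : ℝ) (hδ0 : 0 < δ) (hδ1 : δ < 1/3)
    (τ : ℕ → ℝ) (hτpos : ∀ n, 0 < τ n) (hτ : ∀ n : ℕ, (n : ℝ) ^ (-δ) < τ n) :
    ∃ a : ℕ → ℝ, ∃ b : ℕ → ℂ,
      Filter.Tendsto a Filter.atTop (nhds 0) ∧
      Filter.Tendsto (fun n : ℕ => (n : ℂ) * b n) Filter.atTop (nhds 0) ∧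
      ∀ n : ℕ,
        (∫ θ in (-π)..π,
            Complex.exp (-Complex.I * n * (θ - τ n * Real.sin θ)) *
              Complex.exp (-2 * n * τ n * (Real.sin (θ / 2)) ^ 2) / (2 * π)) =
          ((Real.exp (n * (Real.log (τ n) + 1 - τ n)) / Real.sqrt (2 * π * n) : ℝ) : ℂ) *
            (1 + (a n : ℂ)) + b n := by
  set a : ℕ → ℝ := fun n => Real.sqrt (2 * π * n) * ((n : ℝ) / Real.exp 1) ^ n / (n.factorial : ℝ) - 1 with ha
  set b : ℕ → ℂ := fun n => if n = 0 then 1 else 0 with hb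
  refine ⟨a, b, ?_, ?_, ?_⟩
  · -- a → 0
    have hπ : Real.sqrt π ≠ 0 := by
      positivity
    have h1 : Tendsto (fun n => Real.sqrt π / Stirling.stirlingSeq n) atTop (nhds 1) := by
      have h := Tendsto.div (tendsto_const_nhds (x := Real.sqrt π))
        Stirling.tendsto_stirlingSeq_sqrt_pi hπ
      rw [div_self hπ] at h; exact h
    have heq : ∀ᶠ n in atTop, Real.sqrt π / Stirling.stirlingSeq n - 1 = a n := by
      filter_upwards [eventually_ge_atTop 1] with n hn
      have hn0 : 0 < (n : ℝ) := by exact_mod_cast hn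
      have hfac : (0 : ℝ) < n.factorial := by exact_mod_cast n.factorial_pos
      have hd : (0 : ℝ) < Real.sqrt (2 * n) * ((n : ℝ) / Real.exp 1) ^ n := by
        positivity
      have hsq : Real.sqrt (2 * π * n) = Real.sqrt π * Real.sqrt (2 * n) := by
        rw [show 2 * π * (n : ℝ) = π * (2 * n) by ring,
          Real.sqrt_mul Real.pi_pos.le]
      rw [ha]
      simp only
      rw [Stirling.stirlingSeq, hsq]
      field_simp
    have := (h1.sub_const 1)
    rw [sub_self] at this
    exact Tendsto.congr' heq this
  · -- n * b n → 0
    have heq : (fun _ : ℕ => (0 : ℂ)) =ᶠ[atTop] (fun n : ℕ => (n : ℂ) * b n) := by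
      filter_upwards [eventually_ge_atTop 1] with n hn
      have : n ≠ 0 := by omega
      simp [hb, this]
    exact Tendsto.congr' heq tendsto_const_nhds
  · intro n
    have hπpos := Real.pi_pos
    -- compute the integral
    have hint : (∫ θ in (-π)..π,
            Complex.exp (-Complex.I * n * (θ - τ n * Real.sin θ)) *
              Complex.exp (-2 * n * τ n * (Real.sin (θ / 2)) ^ 2) / (2 * π)) =
        ((Real.exp (-(n * τ n)) * (n * τ n) ^ n / n.factorial : ℝ) : ℂ) := by
      have hcong : (∫ θ in (-π)..π,
            Complex.exp (-Complex.I * n * (θ - τ n * Real.sin θ)) *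
              Complex.exp (-2 * n * τ n * (Real.sin (θ / 2)) ^ 2) / (2 * π)) =
          ∫ θ in (-π)..π, Complex.exp (-((n : ℂ) * τ n)) *
            (Complex.exp (-Complex.I * n * θ) *
              Complex.exp (((n : ℂ) * τ n) * Complex.exp (Complex.I * θ))) / (2 * π) := by
        apply intervalIntegral.integral_congr
        intro θ _
        have hs : (Real.sin (θ / 2)) ^ 2 = (1 - Real.cos θ) / 2 := by
          have h2 := Real.cos_two_mul' (θ / 2)
          rw [show 2 * (θ / 2) = θ by ring] at h2
          nlinarith [Real.sin_sq_add_cos_sq (θ / 2)]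
        have hsC : ((Real.sin (θ / 2) : ℂ)) ^ 2 = (1 - (Real.cos θ : ℂ)) / 2 := by
          exact_mod_cast congrArg (fun x : ℝ => (x : ℂ)) hs
        have he : Complex.exp (Complex.I * θ) = (Real.cos θ : ℂ) + (Real.sin θ : ℂ) * Complex.I := by
          rw [show Complex.I * (θ : ℂ) = (θ : ℂ) * Complex.I by ring, Complex.exp_mul_I,
            Complex.ofReal_cos, Complex.ofReal_sin]
        have hnum : Complex.exp (-Complex.I * n * (θ - τ n * Real.sin θ)) *
              Complex.exp (-2 * n * τ n * (Real.sin (θ / 2)) ^ 2)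
            = Complex.exp (-((n : ℂ) * τ n)) *
              (Complex.exp (-Complex.I * n * θ) *
                Complex.exp (((n : ℂ) * τ n) * Complex.exp (Complex.I * θ))) := by
          rw [← Complex.exp_add, ← Complex.exp_add, ← Complex.exp_add]
          refine congrArg Complex.exp ?_
          rw [he, hsC]
          ring
        simp only
        rw [hnum]
      rw [hcong, intervalIntegral.integral_div, intervalIntegral.integral_const_mul,
        key_integral' ((n : ℂ) * τ n) n]
      have h2π : ((2 : ℂ) * π) ≠ 0 := by
        simp [Complex.ofReal_ne_zero, Real.pi_ne_zero]
      have hfac : ((n.factorial : ℂ)) ≠ 0 := by exact_mod_cast n.factorial_ne_zero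
      have hexp : Complex.exp (-((n : ℂ) * τ n)) = ((Real.exp (-(n * τ n)) : ℝ) : ℂ) := by
        rw [Complex.ofReal_exp]; push_cast; ring_nf
      rw [hexp]
      push_cast
      field_simp
    rw [hint]
    by_cases hn : n = 0
    · subst hn
      simp [hb]
    · have hn1 : 1 ≤ n := by omega
      have hn0 : 0 < (n : ℝ) := by exact_mod_cast Nat.pos_of_ne_zero hn
      have hfac : (0 : ℝ) < n.factorial := by exact_mod_cast n.factorial_pos
      have hsq : (0 : ℝ) < Real.sqrt (2 * π * n) := by positivity
      have hreal : Real.exp (-(n * τ n)) * (n * τ n) ^ n / n.factorial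
          = Real.exp (n * (Real.log (τ n) + 1 - τ n)) / Real.sqrt (2 * π * n) *
            (1 + a n) := by
        have h1a : 1 + a n = Real.sqrt (2 * π * n) * ((n : ℝ) / Real.exp 1) ^ n / n.factorial := by
          rw [ha]; ring
        rw [h1a]
        have hre : Real.exp (n : ℝ) = Real.exp 1 ^ n := by
          rw [← Real.exp_nat_mul, mul_one]
        have hexp1 : Real.exp (n * (Real.log (τ n) + 1 - τ n))
            = (τ n) ^ n * Real.exp n * Real.exp (-(n * τ n)) := by
          rw [show (n : ℝ) * (Real.log (τ n) + 1 - τ n)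
              = n * Real.log (τ n) + n * 1 + (-(n * τ n)) by ring,
            Real.exp_add, Real.exp_add, Real.exp_nat_mul, Real.exp_log (hτpos n),
            mul_one, hre]
        rw [hexp1]
        have hen : ((n : ℝ) / Real.exp 1) ^ n * Real.exp n = (n : ℝ) ^ n := by
          rw [div_pow, hre]
          field_simp
        field_simp
        rw [mul_pow]
        nlinarith [hen, Real.exp_pos (-(↑n * τ n)), pow_pos (hτpos n) n,
          sq_nonneg ((n:ℝ)^n)]
      rw [hb]
      simp only [hn, if_false, add_zero]
      rw [hreal]
      push_cast
      ring
end

section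
/- The series ∑_{k=1}^∞ ( k·ln(1 + 1/(2k)) − k·ln(1 − 1/(2k)) − 1 ) converges and its sum equals (1 − ln 2)/2. -/
open Real Filter Finset Nat Topology

private lemma aux_bound (k : ℕ) :
    |((k : ℝ) + 1) * Real.log (1 + 1 / (2 * ((k : ℝ) + 1))) -
      ((k : ℝ) + 1) * Real.log (1 - 1 / (2 * ((k : ℝ) + 1))) - 1| ≤
      1 / (2 * ((k : ℝ) + 1) ^ 2) := by
  have hk : (0:ℝ) ≤ (k:ℝ) := Nat.cast_nonneg k
  set n : ℝ := (k : ℝ) + 1 with hn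
  have hn1 : (1:ℝ) ≤ n := by rw [hn]; linarith
  have hn0 : (0:ℝ) < n := by linarith
  set x : ℝ := 1 / (2 * n) with hx
  have hx0 : 0 < x := by positivity
  have hxhalf : x ≤ 1/2 := by
    rw [hx, div_le_div_iff₀ (by linarith) (by norm_num)]; linarith
  have habs : |x| < 1 := by rw [abs_of_pos hx0]; linarith
  have habs' : |(-x)| < 1 := by rwa [abs_neg]
  have h1 := Real.abs_log_sub_add_sum_range_le habs 2
  have h2 := Real.abs_log_sub_add_sum_range_le habs' 2
  simp only [Finset.sum_range_succ, Finset.sum_range_zero, pow_one, pow_succ,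
    abs_neg, sub_neg_eq_add] at h1 h2
  rw [abs_of_pos hx0] at h1 h2
  norm_num at h1 h2
  have h2nx : n * (2 * x) = 1 := by rw [hx]; field_simp
  clear_value n x
  have key : n * Real.log (1 + x) - n * Real.log (1 - x) - 1
      = n * ((-x + x*x/2 + Real.log (1 + x)) - (x + x*x/2 + Real.log (1 - x))) := by
    linear_combination h2nx
  rw [key, abs_mul, abs_of_pos hn0]
  have hub : |(-x + x*x/2 + Real.log (1 + x)) - (x + x*x/2 + Real.log (1 - x))|
      ≤ x*x*x/(1-x) + x*x*x/(1-x) := (abs_sub _ _).trans (add_le_add h2 h1)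
  have hdiv : x*x*x/(1-x) ≤ 2*(x*x*x) := by
    rw [div_le_iff₀ (by linarith)]
    nlinarith [pow_pos hx0 3]
  calc n * |(-x + x*x/2 + Real.log (1 + x)) - (x + x*x/2 + Real.log (1 - x))|
      ≤ n * (2*(x*x*x) + 2*(x*x*x)) := by
        refine mul_le_mul_of_nonneg_left (hub.trans (add_le_add hdiv hdiv)) hn0.le
    _ = 1 / (2 * n ^ 2) := by
        have hx' : x = 1/(2*n) := hx
        rw [hx']; field_simp; ring

private lemma partial_sum_eq (N : ℕ) :
    ∑ k ∈ Finset.range N,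
      (((k : ℝ) + 1) * Real.log (1 + 1 / (2 * ((k : ℝ) + 1))) -
        ((k : ℝ) + 1) * Real.log (1 - 1 / (2 * ((k : ℝ) + 1))) - 1)
    = N * Real.log (2*N+1) + N * Real.log 2 + Real.log (N !) - Real.log ((2*N)!) - N := by
  induction N with
  | zero => simp
  | succ N ih =>
    rw [Finset.sum_range_succ, ih]
    have hN : (0:ℝ) ≤ N := Nat.cast_nonneg N
    have e1 : (1 : ℝ) + 1/(2*((N:ℝ)+1)) = (2*N+3)/(2*((N:ℝ)+1)) := by
      field_simp; ring
    have e2 : (1 : ℝ) - 1/(2*((N:ℝ)+1)) = (2*N+1)/(2*((N:ℝ)+1)) := by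
      field_simp; ring
    have lf1 : Real.log (((N+1)! : ℕ) : ℝ) = Real.log ((N:ℝ)+1) + Real.log ((N ! : ℕ) : ℝ) := by
      rw [Nat.factorial_succ]
      push_cast
      rw [Real.log_mul (by positivity) (by positivity)]
    have lf2 : Real.log (((2*(N+1))! : ℕ) : ℝ)
        = Real.log 2 + Real.log ((N:ℝ)+1) + Real.log (2*(N:ℝ)+1) + Real.log (((2*N)! : ℕ) : ℝ) := by
      have h : 2*(N+1) = (2*N+1)+1 := by ring
      rw [h, Nat.factorial_succ, Nat.factorial_succ]
      push_cast
      have h2 : ((2:ℝ)*N+1+1) = 2*((N:ℝ)+1) := by ring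
      rw [h2, Real.log_mul (by positivity) (by positivity),
        Real.log_mul (by positivity) (by positivity),
        Real.log_mul (by positivity) (by positivity)]
      ring
    rw [e1, e2, Real.log_div (by positivity) (by positivity),
      Real.log_div (by positivity) (by positivity), lf1, lf2]
    push_cast
    ring_nf

private lemma log_stirling (N : ℕ) (h : 1 ≤ N) :
    Real.log ((N ! : ℕ) : ℝ) = Real.log (Stirling.stirlingSeq N)
      + (Real.log 2 + Real.log N)/2 + N * (Real.log N - 1) := by
  have hN : (0:ℝ) < N := by exact_mod_cast h
  have hfac : (0:ℝ) < ((N ! : ℕ) : ℝ) := by exact_mod_cast N.factorial_pos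
  rw [Stirling.stirlingSeq, Real.log_div (by positivity) (by positivity),
    Real.log_mul (by positivity) (by positivity),
    Real.log_sqrt (by positivity), Real.log_pow,
    Real.log_div (by positivity) (Real.exp_ne_zero 1),
    Real.log_exp, Real.log_mul (by norm_num) (by positivity)]
  ring

private lemma tendsto_aux :
    Tendsto (fun N : ℕ => (N:ℝ) * Real.log (1 + 1/(2*(N:ℝ)))
      + Real.log (Stirling.stirlingSeq N) - Real.log (Stirling.stirlingSeq (2*N))
      - Real.log 2 / 2) atTop (𝓝 ((1 - Real.log 2)/2)) := by
  have t1 : Tendsto (fun N : ℕ => (N:ℝ) * Real.log (1 + 1/(2*(N:ℝ)))) atTop (𝓝 (1/2)) := by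
    have := (Real.tendsto_mul_log_one_add_div_atTop (1/2)).comp
      (tendsto_natCast_atTop_atTop (R := ℝ))
    refine this.congr fun n => ?_
    simp only [Function.comp_apply, div_div]
  have t2 : Tendsto (fun N : ℕ => Real.log (Stirling.stirlingSeq N)) atTop
      (𝓝 (Real.log (Real.sqrt π))) :=
    ((Real.continuousAt_log (by positivity)).tendsto).comp Stirling.tendsto_stirlingSeq_sqrt_pi
  have h2N : Tendsto (fun N : ℕ => 2*N) atTop atTop :=
    tendsto_atTop_mono (fun n => by simp [id]; omega) tendsto_id
  have t3 : Tendsto (fun N : ℕ => Real.log (Stirling.stirlingSeq (2*N))) atTop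
      (𝓝 (Real.log (Real.sqrt π))) := t2.comp h2N
  have := ((t1.add t2).sub t3).sub (tendsto_const_nhds (x := Real.log 2 / 2))
  convert this using 2
  ring

theorem sum_k_log_ratio :
    HasSum
      (fun k : ℕ =>
        ((k : ℝ) + 1) * Real.log (1 + 1 / (2 * ((k : ℝ) + 1))) -
          ((k : ℝ) + 1) * Real.log (1 - 1 / (2 * ((k : ℝ) + 1))) - 1)
      ((1 - Real.log 2) / 2) := by
  have hsummable : Summable (fun k : ℕ =>
      ‖((k : ℝ) + 1) * Real.log (1 + 1 / (2 * ((k : ℝ) + 1))) -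
        ((k : ℝ) + 1) * Real.log (1 - 1 / (2 * ((k : ℝ) + 1))) - 1‖) := by
    have hbase : Summable (fun n : ℕ => 1 / (n:ℝ)^2) := by
      simpa using Real.summable_one_div_nat_pow.mpr (le_refl 2)
    have hshift : Summable (fun k : ℕ => 1 / ((k:ℝ)+1)^2) := by
      have := (summable_nat_add_iff 1).mpr hbase
      refine this.congr fun k => ?_
      push_cast
      ring
    have htarget : Summable (fun k : ℕ => 1 / (2*((k:ℝ)+1)^2)) := by
      refine (hshift.mul_left (1/2)).congr fun k => ?_
      field_simp
    exact Summable.of_nonneg_of_le (fun k => norm_nonneg _)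
      (fun k => by simpa [Real.norm_eq_abs] using aux_bound k) htarget
  refine (hasSum_iff_tendsto_nat_of_summable_norm hsummable).mpr ?_
  refine tendsto_aux.congr' ?_
  filter_upwards [eventually_ge_atTop 1] with N hN
  have hN0 : (0:ℝ) < N := by exact_mod_cast hN
  have e : (1:ℝ) + 1/(2*(N:ℝ)) = (2*(N:ℝ)+1)/(2*(N:ℝ)) := by field_simp
  have l2 : Real.log (2*(N:ℝ)) = Real.log 2 + Real.log (N:ℝ) :=
    Real.log_mul two_ne_zero (by positivity)
  rw [partial_sum_eq, log_stirling N hN, log_stirling (2*N) (by omega), e,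
    Real.log_div (by positivity) (by positivity)]
  push_cast
  rw [l2]
  ring
end

section
/- Fix a real number a with |a| < 1. Then lim_{ε→0⁺} ( ∏_{k=0}^∞ (1 − a·e^{−εk}) ) · exp( ε^{−1} · ∑_{j=1}^∞ a^j/j² ) = √(1 − a). In other words, the q-Pochhammer symbol (a; e^{−ε})_∞ is asymptotic to e^{−ε^{−1}·Li₂(a)}·√(1−a) as ε → 0⁺. -/
open Real Filter
set_option maxHeartbeats 1000000


noncomputable def haux (x : ℝ) : ℝ := x⁻¹ - (1 - Real.exp (-x))⁻¹

lemma haux_bound {x : ℝ} (hx : 0 < x) : |haux x| ≤ 1 := by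
  have he0 : 0 < Real.exp (-x) := Real.exp_pos _
  have he1 : Real.exp (-x) < 1 := Real.exp_lt_one_iff.mpr (by linarith)
  have hd : 0 < 1 - Real.exp (-x) := by linarith
  have h2 : 1 - x ≤ Real.exp (-x) := by
    have := Real.add_one_le_exp (-x); linarith
  have h3 : (x + 1) * Real.exp (-x) ≤ 1 := by
    have h4 : x + 1 ≤ Real.exp x := by have := Real.add_one_le_exp x; linarith
    calc (x + 1) * Real.exp (-x) ≤ Real.exp x * Real.exp (-x) := by
          apply mul_le_mul_of_nonneg_right h4 he0.le
      _ = 1 := by rw [← Real.exp_add]; simp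
  have hdx : 1 - Real.exp (-x) ≤ x := by linarith
  have heq : haux x = ((1 - Real.exp (-x)) - x) / (x * (1 - Real.exp (-x))) := by
    unfold haux; field_simp
  rw [heq, abs_div, abs_of_pos (mul_pos hx hd),
    abs_of_nonpos (by linarith : 1 - Real.exp (-x) - x ≤ 0), div_le_one (mul_pos hx hd)]
  nlinarith [h3]

lemma tendsto_A : Tendsto (fun x : ℝ => (1 - Real.exp (-x) - x) / x ^ 2)
    (nhdsWithin 0 (Set.Ioi 0)) (nhds (-(1/2))) := by
  have key : ∀ x : ℝ, 0 < x → x ≤ 1 →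
      |(1 - Real.exp (-x) - x) / x ^ 2 - (-(1/2))| ≤ 2/9 * x := by
    intro x hx hx1
    have hb := Real.exp_bound (x := -x) (by rwa [abs_neg, abs_of_pos hx]) (n := 3) (by norm_num)
    have hs : ∑ m ∈ Finset.range 3, (-x) ^ m / (m.factorial : ℝ) = 1 - x + x ^ 2 / 2 := by
      simp [Finset.sum_range_succ, Nat.factorial]; ring
    rw [hs, abs_neg, abs_of_pos hx] at hb
    have hb' : |Real.exp (-x) - (1 - x + x ^ 2 / 2)| ≤ 2/9 * x ^ 3 := by
      calc |Real.exp (-x) - (1 - x + x ^ 2 / 2)| ≤ x ^ 3 * (4 / (6 * 3)) := by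
            convert hb using 2 <;> norm_num [Nat.factorial]
        _ = 2/9 * x ^ 3 := by ring
    have hx2 : (0:ℝ) < x ^ 2 := by positivity
    have : (1 - Real.exp (-x) - x) / x ^ 2 - (-(1/2)) =
        -(Real.exp (-x) - (1 - x + x ^ 2 / 2)) / x ^ 2 := by field_simp; ring
    rw [this, abs_div, abs_neg, abs_of_pos hx2, div_le_iff₀ hx2]
    calc |Real.exp (-x) - (1 - x + x ^ 2 / 2)| ≤ 2/9 * x ^ 3 := hb'
      _ = 2/9 * x * x ^ 2 := by ring
  have key2 : Tendsto (fun x : ℝ => (1 - Real.exp (-x) - x) / x ^ 2 - (-(1/2)))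
      (nhdsWithin 0 (Set.Ioi 0)) (nhds 0) := by
    have hb : ∀ᶠ x in nhdsWithin (0:ℝ) (Set.Ioi 0),
        ‖(1 - Real.exp (-x) - x) / x ^ 2 - (-(1/2))‖ ≤ 2/9 * x := by
      filter_upwards [Ioo_mem_nhdsGT_of_mem (by norm_num : (0:ℝ) ∈ Set.Ico 0 1)] with x hx
      exact key x hx.1 hx.2.le
    have hg : Tendsto (fun x : ℝ => 2/9 * x) (nhdsWithin 0 (Set.Ioi 0)) (nhds 0) := by
      have h0 : Tendsto (fun x : ℝ => 2/9 * x) (nhds 0) (nhds (2/9 * 0)) :=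
        tendsto_id.const_mul _
      rw [mul_zero] at h0
      exact h0.mono_left nhdsWithin_le_nhds
    exact squeeze_zero_norm' hb hg
  exact tendsto_sub_nhds_zero_iff.mp key2

lemma tendsto_B : Tendsto (fun x : ℝ => x / (1 - Real.exp (-x)))
    (nhdsWithin 0 (Set.Ioi 0)) (nhds 1) := by
  have hd : HasDerivAt (fun x : ℝ => 1 - Real.exp (-x)) 1 0 := by
    have h1 : HasDerivAt (fun x : ℝ => -x) (-1) 0 := (hasDerivAt_id 0).neg
    have h2 := h1.exp
    simpa using (h2.const_sub 1)
  have hslope := hasDerivAt_iff_tendsto_slope.mp hd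
  have h3 : Tendsto (fun x : ℝ => (1 - Real.exp (-x)) / x)
      (nhdsWithin 0 (Set.Ioi 0)) (nhds 1) := by
    have := hslope.mono_left (nhdsWithin_mono 0 (fun x hx => Set.mem_compl_singleton_iff.mpr (ne_of_gt hx)))
    apply this.congr
    intro x
    simp [slope_def_field]
    try ring
  have := h3.inv₀ one_ne_zero
  simp only [inv_div] at this
  simpa using this

lemma haux_tendsto : Tendsto haux (nhdsWithin 0 (Set.Ioi 0)) (nhds (-(1/2))) := by
  have := tendsto_A.mul tendsto_B
  rw [show (-(1/2:ℝ)) * 1 = -(1/2) by ring] at this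
  apply this.congr'
  filter_upwards [self_mem_nhdsWithin] with x hx
  have hx : (0:ℝ) < x := hx
  have he1 : Real.exp (-x) < 1 := Real.exp_lt_one_iff.mpr (by linarith)
  have hd : 1 - Real.exp (-x) ≠ 0 := by linarith
  unfold haux
  field_simp
  try ring


section
variable (a : ℝ) (ha : |a| < 1)
include ha

lemma summable_abs_pow : Summable (fun j : ℕ => |a| ^ (j + 1)) := by
  simpa [pow_succ'] using (summable_geometric_of_lt_one (abs_nonneg a) ha).mul_left |a|

lemma key_eq {ε : ℝ} (hε : 0 < ε) :
    (∏' k : ℕ, (1 - a * Real.exp (-ε * k))) *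
      Real.exp (ε⁻¹ * ∑' j : ℕ, a ^ (j + 1) / ((j : ℝ) + 1) ^ 2) =
    Real.exp (∑' j : ℕ, a ^ (j + 1) / ((j : ℝ) + 1) * haux (ε * ((j : ℝ) + 1))) := by
  set q := Real.exp (-ε) with hq
  have hq0 : 0 < q := Real.exp_pos _
  have hq1 : q < 1 := Real.exp_lt_one_iff.mpr (by linarith)
  have hexp : ∀ k : ℕ, Real.exp (-ε * k) = q ^ k := fun k => by
    rw [hq, ← Real.exp_nat_mul]; ring_nf
  have habs : ∀ k : ℕ, |a * q ^ k| < 1 := fun k => by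
    rw [abs_mul, abs_of_pos (pow_pos hq0 k)]
    calc |a| * q ^ k ≤ |a| * 1 := by
          exact mul_le_mul_of_nonneg_left (pow_le_one₀ hq0.le hq1.le) (abs_nonneg a)
      _ < 1 := by simpa using ha
  have hpos : ∀ k : ℕ, 0 < 1 - a * q ^ k := fun k => by
    have := abs_lt.mp (habs k); linarith [this.2]
  -- log series for each k
  have hls : ∀ k : ℕ, HasSum (fun j : ℕ => (a * q ^ k) ^ (j + 1) / ((j : ℝ) + 1))
      (-Real.log (1 - a * q ^ k)) := fun k =>
    Real.hasSum_pow_div_log_of_abs_lt_one (habs k)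
  -- summability of the double family
  have hdouble : Summable (Function.uncurry
      (fun k j : ℕ => (a * q ^ k) ^ (j + 1) / ((j : ℝ) + 1))) := by
    apply Summable.of_norm_bounded (g := fun p : ℕ × ℕ => q ^ p.1 * |a| ^ (p.2 + 1))
    · exact (summable_geometric_of_lt_one hq0.le hq1).mul_of_nonneg (summable_abs_pow a ha)
        (fun k => pow_nonneg hq0.le k) (fun j => pow_nonneg (abs_nonneg a) _)
    · rintro ⟨k, j⟩
      simp only [Function.uncurry]
      have hj1 : (0:ℝ) < (j : ℝ) + 1 := by positivity
      have hthis : ‖(a * q ^ k) ^ (j + 1) / ((j : ℝ) + 1)‖ = |a * q ^ k| ^ (j + 1) / ((j : ℝ) + 1) := by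
        rw [Real.norm_eq_abs, abs_div, abs_pow, abs_of_pos hj1]
      rw [hthis]
      calc |a * q ^ k| ^ (j + 1) / ((j : ℝ) + 1) ≤ |a * q ^ k| ^ (j + 1) :=
            div_le_self (pow_nonneg (abs_nonneg _) _) (by linarith [Nat.cast_nonneg (α := ℝ) j])
        _ = (|a| * q ^ k) ^ (j + 1) := by rw [abs_mul, abs_of_pos (pow_pos hq0 k)]
        _ = |a| ^ (j + 1) * (q ^ k) ^ (j + 1) := mul_pow _ _ _
        _ ≤ |a| ^ (j + 1) * q ^ k := by
            apply mul_le_mul_of_nonneg_left _ (pow_nonneg (abs_nonneg a) _)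
            rw [← pow_mul]
            exact pow_le_pow_of_le_one hq0.le hq1.le (Nat.le_mul_of_pos_right k (Nat.succ_pos j))
        _ = q ^ k * |a| ^ (j + 1) := mul_comm _ _
  -- geometric inner sum
  have hqj : ∀ j : ℕ, q ^ (j + 1) < 1 := fun j => pow_lt_one₀ hq0.le hq1 (Nat.succ_ne_zero j)
  have hqjpos : ∀ j : ℕ, 0 < 1 - q ^ (j + 1) := fun j => by linarith [hqj j]
  have hinner : ∀ j : ℕ, ∑' k : ℕ, (a * q ^ k) ^ (j + 1) / ((j : ℝ) + 1) =
      a ^ (j + 1) / ((j : ℝ) + 1) * (1 - q ^ (j + 1))⁻¹ := by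
    intro j
    have hrw : ∀ k : ℕ, (a * q ^ k) ^ (j + 1) / ((j : ℝ) + 1) =
        a ^ (j + 1) / ((j : ℝ) + 1) * (q ^ (j + 1)) ^ k := fun k => by
      rw [mul_pow, ← pow_mul, ← pow_mul, Nat.mul_comm k (j+1)]; ring
    rw [tsum_congr hrw, tsum_mul_left,
      tsum_geometric_of_lt_one (pow_nonneg hq0.le _) (hqj j)]
  -- sum of logs
  have hlogsum : Summable (fun k : ℕ => Real.log (1 - a * q ^ k)) := by
    apply Summable.of_norm_bounded (g := fun k : ℕ => |a| / (1 - |a|) * q ^ k)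
    · exact ((summable_geometric_of_lt_one hq0.le hq1).mul_left _)
    · intro k
      have h0 := Real.abs_log_sub_add_sum_range_le (habs k) 0
      simp only [Finset.range_zero, Finset.sum_empty, zero_add, pow_one] at h0
      rw [Real.norm_eq_abs]
      refine h0.trans ?_
      have haq : |a * q ^ k| = |a| * q ^ k := by
        rw [abs_mul, abs_of_pos (pow_pos hq0 k)]
      rw [haq]
      have hak : |a| * q ^ k ≤ |a| :=
        mul_le_of_le_one_right (abs_nonneg a) (pow_le_one₀ hq0.le hq1.le)
      have hrhs : |a| / (1 - |a|) * q ^ k = |a| * q ^ k / (1 - |a|) := by ring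
      rw [hrhs]
      gcongr <;> first | positivity | linarith
  set S := ∑' k : ℕ, Real.log (1 - a * q ^ k) with hS
  -- the product equals exp S
  have hprod : (∏' k : ℕ, (1 - a * Real.exp (-ε * k))) = Real.exp S := by
    have h1 : (∏' k : ℕ, (1 - a * Real.exp (-ε * k))) = ∏' k : ℕ, (1 - a * q ^ k) :=
      tprod_congr fun k => by rw [hexp k]
    rw [h1]
    have h2 : HasProd (fun k : ℕ => 1 - a * q ^ k) (Real.exp S) := by
      have h3 := hlogsum.hasSum.rexp
      have h4 : (rexp ∘ fun k : ℕ => Real.log (1 - a * q ^ k)) = fun k : ℕ => 1 - a * q ^ k :=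
        funext fun k => Real.exp_log (hpos k)
      rwa [h4] at h3
    exact h2.tprod_eq
  -- compute S
  have hSval : S = -∑' j : ℕ, a ^ (j + 1) / ((j : ℝ) + 1) * (1 - q ^ (j + 1))⁻¹ := by
    rw [hS]
    have h1 : ∀ k : ℕ, Real.log (1 - a * q ^ k) =
        -∑' j : ℕ, (a * q ^ k) ^ (j + 1) / ((j : ℝ) + 1) := fun k => by
      rw [(hls k).tsum_eq]; ring
    rw [tsum_congr h1, tsum_neg]
    congr 1
    rw [← Summable.tsum_comm hdouble]
    exact tsum_congr hinner
  -- summabilities for the final split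
  have hsum_d : Summable (fun j : ℕ => a ^ (j + 1) / ((j : ℝ) + 1) ^ 2) := by
    apply Summable.of_norm_bounded (summable_abs_pow a ha)
    intro j
    rw [Real.norm_eq_abs, abs_div, abs_pow, abs_of_pos (by positivity : (0:ℝ) < ((j:ℝ)+1)^2)]
    exact div_le_self (pow_nonneg (abs_nonneg _) _)
      (by nlinarith [Nat.cast_nonneg (α := ℝ) j])
  have hsum_c : Summable (fun j : ℕ => a ^ (j + 1) / ((j : ℝ) + 1) * (1 - q ^ (j + 1))⁻¹) := by
    apply Summable.of_norm_bounded (g := fun j : ℕ => (1 - q)⁻¹ * |a| ^ (j + 1))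
    · exact (summable_abs_pow a ha).mul_left _
    · intro j
      have h1 : q ^ (j + 1) ≤ q := by
        calc q ^ (j + 1) ≤ q ^ 1 := pow_le_pow_of_le_one hq0.le hq1.le (by omega)
          _ = q := pow_one q
      have h2 : 0 < 1 - q := by linarith
      rw [Real.norm_eq_abs, abs_mul, abs_div, abs_pow,
        abs_of_pos (show (0:ℝ) < (j:ℝ)+1 by positivity), abs_of_pos (inv_pos.mpr (hqjpos j))]
      have hA : |a| ^ (j + 1) / ((j : ℝ) + 1) ≤ |a| ^ (j + 1) :=
        div_le_self (pow_nonneg (abs_nonneg _) _) (by linarith [Nat.cast_nonneg (α := ℝ) j])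
      have hB : (1 - q ^ (j + 1))⁻¹ ≤ (1 - q)⁻¹ := by
        apply inv_anti₀ h2
        linarith
      calc |a| ^ (j + 1) / ((j : ℝ) + 1) * (1 - q ^ (j + 1))⁻¹
          ≤ |a| ^ (j + 1) * (1 - q)⁻¹ :=
            mul_le_mul hA hB (inv_pos.mpr (hqjpos j)).le (pow_nonneg (abs_nonneg _) _)
        _ = (1 - q)⁻¹ * |a| ^ (j + 1) := mul_comm _ _
  -- final assembly
  rw [hprod, ← Real.exp_add]
  congr 1
  have hterm : ∀ j : ℕ, a ^ (j + 1) / ((j : ℝ) + 1) * haux (ε * ((j : ℝ) + 1)) =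
      ε⁻¹ * (a ^ (j + 1) / ((j : ℝ) + 1) ^ 2) -
        a ^ (j + 1) / ((j : ℝ) + 1) * (1 - q ^ (j + 1))⁻¹ := by
    intro j
    have hj : ((j : ℝ) + 1) ≠ 0 := by positivity
    have hqe : Real.exp (-(ε * ((j : ℝ) + 1))) = q ^ (j + 1) := by
      rw [hq, ← Real.exp_nat_mul]
      congr 1
      push_cast
      ring
    have hne : (1 : ℝ) - q ^ (j + 1) ≠ 0 := (hqjpos j).ne'
    unfold haux
    rw [hqe]
    field_simp
  rw [tsum_congr hterm, Summable.tsum_sub (hsum_d.mul_left _) hsum_c, tsum_mul_left, hSval]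
  ring

lemma G_tendsto : Tendsto
    (fun ε : ℝ => ∑' j : ℕ, a ^ (j + 1) / ((j : ℝ) + 1) * haux (ε * ((j : ℝ) + 1)))
    (nhdsWithin 0 (Set.Ioi 0)) (nhds (1/2 * Real.log (1 - a))) := by
  have hval : (1:ℝ)/2 * Real.log (1 - a) =
      ∑' j : ℕ, a ^ (j + 1) / ((j : ℝ) + 1) * (-(1/2)) := by
    rw [tsum_mul_right, (Real.hasSum_pow_div_log_of_abs_lt_one ha).tsum_eq]; ring
  rw [hval]
  apply tendsto_tsum_of_dominated_convergence (summable_abs_pow a ha)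
  · intro j
    apply Tendsto.const_mul
    apply haux_tendsto.comp
    rw [tendsto_nhdsWithin_iff]
    constructor
    · have h0 : Tendsto (fun ε : ℝ => ε * ((j:ℝ)+1)) (nhds 0) (nhds (0 * ((j:ℝ)+1))) :=
        tendsto_id.mul_const _
      rw [zero_mul] at h0
      exact h0.mono_left nhdsWithin_le_nhds
    · filter_upwards [self_mem_nhdsWithin] with ε hε
      exact (mul_pos (show (0:ℝ) < ε from hε) (show (0:ℝ) < (j:ℝ)+1 by positivity) :)
  · filter_upwards [self_mem_nhdsWithin] with ε hε
    intro j
    have h1 := haux_bound (mul_pos (hε : (0:ℝ) < ε) (show (0:ℝ) < (j:ℝ)+1 by positivity))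
    rw [Real.norm_eq_abs, abs_mul, abs_div, abs_pow,
      abs_of_pos (show (0:ℝ) < (j:ℝ)+1 by positivity)]
    calc |a| ^ (j+1) / ((j:ℝ)+1) * |haux (ε * ((j:ℝ)+1))|
        ≤ |a| ^ (j+1) / ((j:ℝ)+1) * 1 := mul_le_mul_of_nonneg_left h1 (by positivity)
      _ ≤ |a| ^ (j+1) := by
          rw [mul_one]
          exact div_le_self (pow_nonneg (abs_nonneg _) _)
            (by linarith [Nat.cast_nonneg (α := ℝ) j])

end

theorem qPochhammer_asymptotics (a : ℝ) (ha : |a| < 1) :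
    Filter.Tendsto
      (fun ε : ℝ =>
        (∏' k : ℕ, (1 - a * Real.exp (-ε * k))) *
          Real.exp (ε⁻¹ * ∑' j : ℕ, a ^ (j + 1) / ((j : ℝ) + 1) ^ 2))
      (nhdsWithin 0 (Set.Ioi 0)) (nhds (Real.sqrt (1 - a))) := by
  have h1a : (0:ℝ) < 1 - a := by have := lt_of_abs_lt ha; linarith
  have hsqrt : Real.sqrt (1 - a) = Real.exp (1/2 * Real.log (1 - a)) := by
    rw [Real.sqrt_eq_rpow, Real.rpow_def_of_pos h1a]
    congr 1
    ring
  rw [hsqrt]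
  have hT := (Real.continuous_exp.tendsto _).comp (G_tendsto a ha)
  refine Filter.Tendsto.congr' ?_ hT
  filter_upwards [self_mem_nhdsWithin] with ε hε
  exact (key_eq a ha hε).symm
end

section
/- Fix r ∈ (0,1). Then lim_{ε→0⁺} ( ∑_{k=0}^∞ r·e^{−kε}/(1 − r·e^{−kε}) + ε^{−1}·ln(1 − r) ) = r/(2(1 − r)). -/
open Real Filter

-- slope limit: (1 - exp(-x))/x → 1 as x → 0 within Ioi
lemma slope_lim : Tendsto (fun x : ℝ => (1 - Real.exp (-x)) / x) (nhdsWithin 0 (Set.Ioi 0)) (nhds 1) := by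
  have hd : HasDerivAt (fun x : ℝ => 1 - Real.exp (-x)) 1 0 := by
    have := ((Real.hasDerivAt_exp (-(0:ℝ))).comp 0 ((hasDerivAt_id (0:ℝ)).neg))
    simpa using (this.const_sub 1)
  have := hasDerivAt_iff_tendsto_slope.mp hd
  have h2 : Tendsto (fun x : ℝ => (1 - Real.exp (-x)) / x) (nhdsWithin 0 {(0:ℝ)}ᶜ) (nhds 1) := by
    refine this.congr' ?_
    filter_upwards [self_mem_nhdsWithin] with x hx
    simp [slope_def_field]
  exact h2.mono_left (nhdsWithin_mono _ (fun x hx => ne_of_gt hx))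

-- (exp(-x) - 1 + x)/x^2 → 1/2
lemma quad_lim : Tendsto (fun x : ℝ => (Real.exp (-x) - 1 + x) / x ^ 2)
    (nhdsWithin 0 (Set.Ioi 0)) (nhds (1/2)) := by
  apply HasDerivAt.lhopital_zero_nhdsGT (f' := fun x => 1 - Real.exp (-x))
    (g' := fun x => 2 * x)
  · filter_upwards with x
    have := ((Real.hasDerivAt_exp (-x)).comp x ((hasDerivAt_id x).neg))
    have h2 := ((this.sub_const 1).add (hasDerivAt_id x))
    exact h2.congr_deriv (by ring)
  · filter_upwards with x
    simpa using (hasDerivAt_pow 2 x)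
  · filter_upwards [self_mem_nhdsWithin] with x hx
    have hx0 : (0:ℝ) < x := hx
    positivity
  · have : Tendsto (fun x : ℝ => Real.exp (-x) - 1 + x) (nhds 0) (nhds 0) := by
      have := (Real.continuous_exp.comp continuous_neg).tendsto (0:ℝ)
      simpa using (this.sub_const 1).add tendsto_id
    exact this.mono_left nhdsWithin_le_nhds
  · have : Tendsto (fun x : ℝ => x ^ 2) (nhds (0:ℝ)) (nhds 0) := by
      simpa using (continuous_pow 2).tendsto (0:ℝ)
    exact this.mono_left nhdsWithin_le_nhds
  · have h := slope_lim.div_const 2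
    refine h.congr' ?_
    filter_upwards [self_mem_nhdsWithin] with x hx
    rw [div_div]
    ring_nf

lemma G_lim : Tendsto (fun x : ℝ => (1 - Real.exp (-x))⁻¹ - x⁻¹)
    (nhdsWithin 0 (Set.Ioi 0)) (nhds (1/2)) := by
  have h1 : Tendsto (fun x : ℝ => ((Real.exp (-x) - 1 + x) / x ^ 2) * ((1 - Real.exp (-x)) / x)⁻¹)
      (nhdsWithin 0 (Set.Ioi 0)) (nhds ((1/2) * 1⁻¹)) :=
    quad_lim.mul (slope_lim.inv₀ one_ne_zero)
  rw [show ((1:ℝ)/2) * 1⁻¹ = 1/2 by norm_num] at h1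
  refine h1.congr' ?_
  filter_upwards [self_mem_nhdsWithin] with x hx
  have hx0 : (0:ℝ) < x := hx
  have hu : 0 < 1 - Real.exp (-x) := by
    have : Real.exp (-x) < 1 := Real.exp_lt_one_iff.mpr (by linarith)
    linarith
  field_simp
  ring

lemma exp_neg_lt_one {x : ℝ} (hx : 0 < x) : Real.exp (-x) < 1 :=
  Real.exp_lt_one_iff.mpr (by linarith)

lemma G_bounds {x : ℝ} (hx : 0 < x) :
    0 ≤ (1 - Real.exp (-x))⁻¹ - x⁻¹ ∧ (1 - Real.exp (-x))⁻¹ - x⁻¹ ≤ 1 := by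
  set u := 1 - Real.exp (-x) with hu_def
  have hu : 0 < u := by have := exp_neg_lt_one hx; simp [hu_def]; linarith
  have hle : u ≤ x := by
    have := Real.add_one_le_exp (-x)
    simp only [hu_def]; linarith
  have h1 : x ≤ (x + 1) * u := by
    have h2 : (x + 1) * Real.exp (-x) ≤ 1 := by
      have h3 := Real.add_one_le_exp x
      have h4 : (x + 1) * Real.exp (-x) ≤ Real.exp x * Real.exp (-x) :=
        mul_le_mul_of_nonneg_right h3 (Real.exp_pos _).le
      rwa [← Real.exp_add, add_neg_cancel, Real.exp_zero] at h4
    simp only [hu_def]; nlinarith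
  constructor
  · have : x⁻¹ ≤ u⁻¹ := by gcongr
    linarith
  · rw [inv_eq_one_div, inv_eq_one_div, div_sub_div _ _ hu.ne' hx.ne',
      div_le_one (by positivity)]
    nlinarith

set_option maxHeartbeats 1000000 in
lemma key_rewrite (r : ℝ) (hr0 : 0 < r) (hr1 : r < 1) {ε : ℝ} (hε : 0 < ε) :
    (∑' k : ℕ, r * Real.exp (-(k : ℝ) * ε) / (1 - r * Real.exp (-(k : ℝ) * ε))) +
      ε⁻¹ * Real.log (1 - r)
    = ∑' m : ℕ, r ^ (m + 1) *
        ((1 - Real.exp (-(((m : ℝ) + 1) * ε)))⁻¹ - (((m : ℝ) + 1) * ε)⁻¹) := by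
  set q := Real.exp (-ε) with hq_def
  have hq0 : 0 < q := Real.exp_pos _
  have hq1 : q < 1 := exp_neg_lt_one hε
  have hexp : ∀ k : ℕ, Real.exp (-(k : ℝ) * ε) = q ^ k := by
    intro k
    rw [hq_def, ← Real.exp_nat_mul]
    ring_nf
  have hrq : ∀ k : ℕ, 0 ≤ r * q ^ k ∧ r * q ^ k < 1 := by
    intro k
    have h1 : q ^ k ≤ 1 := pow_le_one₀ hq0.le hq1.le
    constructor
    · positivity
    · nlinarith [pow_pos hq0 k]
  set f : ℕ → ℕ → ℝ := fun k m => (r * q ^ k) ^ (m + 1) with hf_def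
  have hf_nonneg : ∀ k m, 0 ≤ f k m := fun k m =>
    pow_nonneg (mul_nonneg hr0.le (pow_nonneg hq0.le _)) _
  have hsum_m : ∀ k, HasSum (f k) (r * q ^ k / (1 - r * q ^ k)) := by
    intro k
    obtain ⟨h0, h1⟩ := hrq k
    have h := (hasSum_geometric_of_lt_one h0 h1).mul_left (r * q ^ k)
    have he : (fun m : ℕ => (r * q ^ k) * (r * q ^ k) ^ m) = f k := by
      funext m; simp only [hf_def]; rw [pow_succ]; ring
    rw [div_eq_mul_inv]
    exact he ▸ h
  have hq1m : ∀ m : ℕ, q ^ (m + 1) < 1 := fun m => pow_lt_one₀ hq0.le hq1 (Nat.succ_ne_zero m)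
  have hsum_k : ∀ m, HasSum (fun k => f k m) (r ^ (m + 1) * (1 - q ^ (m + 1))⁻¹) := by
    intro m
    have h := (hasSum_geometric_of_lt_one (pow_nonneg hq0.le (m+1)) (hq1m m)).mul_left
      (r ^ (m + 1))
    have he : (fun k : ℕ => r ^ (m + 1) * (q ^ (m + 1)) ^ k) = fun k => f k m := by
      funext k; simp only [hf_def]
      rw [mul_pow, ← pow_mul, ← pow_mul]
      ring_nf
    exact he ▸ h
  have hF : Summable (Function.uncurry f) := by
    refine (summable_prod_of_nonneg (fun p => hf_nonneg p.1 p.2)).mpr ⟨?_, ?_⟩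
    · exact fun k => (hsum_m k).summable
    · refine Summable.of_nonneg_of_le (f := fun k => (1 - r)⁻¹ * (r * q ^ k))
        (fun k => tsum_nonneg fun m => hf_nonneg k m) (fun k => ?_) ?_
      · show (∑' m : ℕ, f k m) ≤ (1 - r)⁻¹ * (r * q ^ k)
        rw [(hsum_m k).tsum_eq]
        obtain ⟨h0, h1⟩ := hrq k
        rw [div_eq_inv_mul]
        have h2 : q ^ k ≤ 1 := pow_le_one₀ hq0.le hq1.le
        have h3 : (1 - r * q ^ k)⁻¹ ≤ (1 - r)⁻¹ := by
          have : r * q ^ k ≤ r := by nlinarith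
          gcongr
        exact mul_le_mul_of_nonneg_right h3 h0
      · exact ((summable_geometric_of_lt_one hq0.le hq1).mul_left r).mul_left _
  have hswap : (∑' k : ℕ, ∑' m : ℕ, f k m) = ∑' m : ℕ, ∑' k : ℕ, f k m :=
    (Summable.tsum_comm' hF (fun k => (hsum_m k).summable) (fun m => (hsum_k m).summable)).symm
  have hS1 : (∑' k : ℕ, r * Real.exp (-(k : ℝ) * ε) / (1 - r * Real.exp (-(k : ℝ) * ε)))
      = ∑' m : ℕ, r ^ (m + 1) * (1 - q ^ (m + 1))⁻¹ := by
    have h : (∑' k : ℕ, r * Real.exp (-(k : ℝ) * ε) / (1 - r * Real.exp (-(k : ℝ) * ε)))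
        = ∑' k : ℕ, ∑' m : ℕ, f k m := by
      congr 1; funext k
      rw [hexp k, (hsum_m k).tsum_eq]
    rw [h, hswap]
    congr 1; funext m
    exact (hsum_k m).tsum_eq
  have hlog : ε⁻¹ * Real.log (1 - r) = -∑' m : ℕ, ε⁻¹ * (r ^ (m + 1) / ((m : ℝ) + 1)) := by
    have h := (hasSum_pow_div_log_of_abs_lt_one (x := r)
      (by rw [abs_of_pos hr0]; exact hr1)).tsum_eq
    rw [tsum_mul_left]
    push_cast at h
    rw [h]
    ring
  have hsummable1 : Summable (fun m : ℕ => r ^ (m + 1) * (1 - q ^ (m + 1))⁻¹) := by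
    apply Summable.of_nonneg_of_le
      (g := fun m : ℕ => r ^ (m + 1) * (1 - q ^ (m + 1))⁻¹)
      (f := fun m : ℕ => (1 - q)⁻¹ * r ^ (m + 1))
    · intro m
      have := hq1m m
      exact mul_nonneg (pow_nonneg hr0.le _) (inv_nonneg.mpr (by linarith))
    · intro m
      have h1 : q ^ (m + 1) ≤ q := by
        have hm := pow_le_one₀ hq0.le hq1.le (n := m)
        calc q ^ (m+1) = q ^ m * q := pow_succ q m
        _ ≤ 1 * q := by nlinarith
        _ = q := one_mul q
      have h2 : (1 - q ^ (m + 1))⁻¹ ≤ (1 - q)⁻¹ := by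
        have hpos : 0 < 1 - q := by linarith
        gcongr
      calc r ^ (m+1) * (1 - q^(m+1))⁻¹ ≤ r ^ (m+1) * (1-q)⁻¹ :=
            mul_le_mul_of_nonneg_left h2 (pow_nonneg hr0.le _)
        _ = (1-q)⁻¹ * r ^ (m+1) := by ring
    · apply Summable.mul_left
      have h := (summable_geometric_of_lt_one hr0.le hr1).mul_left r
      exact h.congr fun m => by rw [pow_succ]; ring
  have hsummable2 : Summable (fun m : ℕ => ε⁻¹ * (r ^ (m + 1) / ((m : ℝ) + 1))) := by
    apply Summable.mul_left
    apply Summable.of_nonneg_of_le (fun m => by positivity) (f := fun m => r ^ (m + 1))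
    · intro m
      rw [div_le_iff₀ (by positivity)]
      nlinarith [pow_pos hr0 (m+1), (Nat.cast_nonneg m : (0:ℝ) ≤ (m:ℝ))]
    · have h := (summable_geometric_of_lt_one hr0.le hr1).mul_left r
      exact h.congr fun m => by rw [pow_succ]; ring
  rw [hS1, hlog, ← sub_eq_add_neg, ← Summable.tsum_sub hsummable1 hsummable2]
  congr 1; funext m
  have hqe : q ^ (m + 1) = Real.exp (-(((m : ℝ) + 1) * ε)) := by
    rw [hq_def, ← Real.exp_nat_mul]
    push_cast
    ring_nf
  rw [hqe, mul_inv]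
  have hm1 : ((m:ℝ) + 1) ≠ 0 := by positivity
  field_simp

theorem euler_maclaurin_sum_asymptotics (r : ℝ) (hr0 : 0 < r) (hr1 : r < 1) :
    Filter.Tendsto
      (fun ε : ℝ =>
        (∑' k : ℕ, r * Real.exp (-(k : ℝ) * ε) / (1 - r * Real.exp (-(k : ℝ) * ε))) +
          ε⁻¹ * Real.log (1 - r))
      (nhdsWithin 0 (Set.Ioi 0)) (nhds (r / (2 * (1 - r)))) := by
  have hbound_sum : Summable (fun m : ℕ => r ^ (m + 1)) := by
    have h := (summable_geometric_of_lt_one hr0.le hr1).mul_left r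
    exact h.congr fun m => by rw [pow_succ]; ring
  have hlim : Tendsto (fun ε : ℝ => ∑' m : ℕ, r ^ (m + 1) *
      ((1 - Real.exp (-(((m : ℝ) + 1) * ε)))⁻¹ - (((m : ℝ) + 1) * ε)⁻¹))
      (nhdsWithin 0 (Set.Ioi 0)) (nhds (∑' m : ℕ, r ^ (m + 1) * (1 / 2))) := by
    apply tendsto_tsum_of_dominated_convergence hbound_sum
    · intro m
      have hmap : Tendsto (fun ε : ℝ => ((m : ℝ) + 1) * ε)
          (nhdsWithin 0 (Set.Ioi 0)) (nhdsWithin 0 (Set.Ioi 0)) := by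
        apply tendsto_nhdsWithin_of_tendsto_nhds_of_eventually_within
        · have h : Tendsto (fun ε : ℝ => ((m : ℝ) + 1) * ε) (nhds 0)
              (nhds (((m : ℝ) + 1) * 0)) := (tendsto_const_nhds.mul tendsto_id)
          rw [mul_zero] at h
          exact h.mono_left nhdsWithin_le_nhds
        · filter_upwards [self_mem_nhdsWithin] with x hx
          have hx0 : (0:ℝ) < x := hx
          exact Set.mem_Ioi.mpr (mul_pos (by positivity) hx0)
      exact (G_lim.comp hmap).const_mul _
    · filter_upwards [self_mem_nhdsWithin] with ε hε m
      have hε0 : (0:ℝ) < ε := hε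
      have hx : 0 < ((m : ℝ) + 1) * ε := mul_pos (by positivity) hε0
      obtain ⟨h0, h1⟩ := G_bounds hx
      rw [Real.norm_eq_abs, abs_mul, abs_of_nonneg (pow_nonneg hr0.le _), abs_of_nonneg h0]
      nlinarith [pow_nonneg hr0.le (m + 1), pow_pos hr0 (m + 1)]
  have hval : (∑' m : ℕ, r ^ (m + 1) * (1 / 2)) = r / (2 * (1 - r)) := by
    have h1 : (∑' m : ℕ, r ^ (m + 1) * (1 / 2)) = (∑' m : ℕ, r ^ (m + 1)) * (1 / 2) :=
      tsum_mul_right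
    have h2 : (∑' m : ℕ, r ^ (m + 1)) = r * (1 - r)⁻¹ := by
      have h := (hasSum_geometric_of_lt_one hr0.le hr1).mul_left r
      have he : (fun m : ℕ => r * r ^ m) = fun m : ℕ => r ^ (m + 1) := by
        funext m; rw [pow_succ]; ring
      rw [← he]
      exact (h.tsum_eq)
    rw [h1, h2]
    rw [div_eq_mul_inv (r) (2 * (1-r)), mul_inv]
    ring
  rw [hval] at hlim
  refine hlim.congr' ?_
  filter_upwards [self_mem_nhdsWithin] with ε hε
  exact (key_rewrite r hr0 hr1 hε).symm
end

section
/- ∫_0^∞ ( x/(e^x − 1) )² dx = π²/3 − 2·∑_{k=1}^∞ 1/k³, i.e. the integral equals π²/3 − 2ζ(3). -/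
open Real MeasureTheory

namespace IntegralSqAux

open Set

lemma intgr (n : ℕ) : IntegrableOn
    (fun x : ℝ => ((n:ℝ)+1) * (x ^ 2 * Real.exp (-(((n:ℝ)+2) * x)))) (Ioi 0) := by
  apply Integrable.const_mul
  have := integrableOn_rpow_mul_exp_neg_mul_rpow (p := 1) (s := 2) (b := (n:ℝ)+2)
    (by norm_num) (by norm_num) (by positivity)
  refine this.congr_fun (fun x hx => ?_) measurableSet_Ioi
  dsimp only
  rw [Real.rpow_one, show ((2:ℝ)) = ((2:ℕ):ℝ) from by norm_num, Real.rpow_natCast, neg_mul]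

lemma per_term (n : ℕ) : ∫ x in Ioi (0:ℝ), ((n:ℝ)+1) * (x ^ 2 * Real.exp (-(((n:ℝ)+2) * x))) =
    ((n:ℝ)+1) * (2 / ((n:ℝ)+2) ^ 3) := by
  rw [MeasureTheory.integral_const_mul]
  have h := Real.integral_rpow_mul_exp_neg_mul_Ioi (a := 3) (r := (n:ℝ)+2) (by norm_num)
    (by positivity)
  rw [show (3:ℝ) - 1 = 2 by norm_num] at h
  have e1 : ∫ x in Ioi (0:ℝ), x ^ 2 * Real.exp (-(((n:ℝ)+2) * x)) =
      ∫ x in Ioi (0:ℝ), x ^ (2:ℝ) * Real.exp (-(((n:ℝ)+2) * x)) := by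
    refine setIntegral_congr_fun measurableSet_Ioi fun x hx => ?_
    rw [← Real.rpow_natCast x 2]; norm_num
  have hg : Real.Gamma 3 = 2 := by
    rw [show (3:ℝ) = ((2:ℕ):ℝ)+1 by norm_num, Real.Gamma_nat_eq_factorial]; norm_num
  rw [e1, h, hg, show (3:ℝ) = ((3:ℕ):ℝ) by norm_cast, Real.rpow_natCast]
  rw [div_pow, one_pow]
  ring

lemma ptwise {x : ℝ} (hx : 0 < x) :
    HasSum (fun n : ℕ => ((n:ℝ)+1) * (x ^ 2 * Real.exp (-(((n:ℝ)+2) * x))))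
      ((x / (Real.exp x - 1)) ^ 2) := by
  set r := Real.exp (-x) with hr
  have hr0 : 0 < r := Real.exp_pos _
  have hr1 : r < 1 := by rw [hr]; exact Real.exp_lt_one_iff.mpr (by linarith)
  have hnorm : ‖r‖ < 1 := by rw [Real.norm_eq_abs, abs_of_pos hr0]; exact hr1
  have h1 : HasSum (fun m : ℕ => (m:ℝ) * r ^ m) (r / (1 - r) ^ 2) :=
    hasSum_coe_mul_geometric_of_norm_lt_one hnorm
  have h2' := (hasSum_nat_add_iff' 1).mpr h1
  simp only [Finset.range_one, Finset.sum_singleton, Nat.cast_zero, zero_mul, sub_zero,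
    Nat.cast_add, Nat.cast_one, pow_zero] at h2'
  have h3 := h2'.mul_left (x ^ 2 * r)
  have hexp1 : Real.exp x - 1 ≠ 0 := by
    have := Real.exp_lt_exp.mpr hx; simp only [Real.exp_zero] at this; linarith
  have hrne : (1 : ℝ) - r ≠ 0 := by linarith
  have heq : ∀ n : ℕ, x ^ 2 * r * (((n:ℝ)+1) * r ^ (n+1))
      = ((n:ℝ)+1) * (x ^ 2 * Real.exp (-(((n:ℝ)+2) * x))) := by
    intro n
    rw [show -(((n:ℝ)+2) * x) = (((n+2 : ℕ)) : ℝ) * (-x) from by push_cast; ring,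
      Real.exp_nat_mul, ← hr]
    ring
  have e : (x / (Real.exp x - 1)) ^ 2 = x ^ 2 * r * (r / (1 - r) ^ 2) := by
    have key2 : r * Real.exp x = 1 := by rw [hr, ← Real.exp_add]; simp
    have hex : Real.exp x = 1 / r := by rw [eq_div_iff hr0.ne', mul_comm]; exact key2
    rw [hex]
    field_simp
  rw [e]
  exact h3.congr_fun fun n => (heq n).symm

lemma summable3 : Summable (fun n : ℕ => 1 / ((n:ℝ)) ^ 3) :=
  summable_one_div_nat_pow.mpr (by norm_num)

lemma summable2 : Summable (fun n : ℕ => 1 / ((n:ℝ)) ^ 2) :=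
  summable_one_div_nat_pow.mpr (by norm_num)

lemma hz2 : HasSum (fun n : ℕ => 1 / ((n:ℝ)+2) ^ 2) (π ^ 2 / 6 - 1) := by
  have h := (hasSum_nat_add_iff' (f := fun n : ℕ => 1 / ((n:ℝ)) ^ 2) 2).mpr hasSum_zeta_two
  have : (∑ i ∈ Finset.range 2, 1 / ((i:ℝ)) ^ 2) = 1 := by norm_num [Finset.sum_range_succ]
  rw [this] at h
  refine h.congr_fun fun n => ?_
  push_cast
  ring_nf

lemma tsum3 : (∑' n : ℕ, 1 / ((n:ℝ)) ^ 3) = ∑' k : ℕ, 1 / ((k : ℝ) + 1) ^ 3 := by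
  rw [Summable.tsum_eq_zero_add summable3]
  norm_num

lemma hz3 : HasSum (fun n : ℕ => 1 / ((n:ℝ)+2) ^ 3)
    ((∑' k : ℕ, 1 / ((k : ℝ) + 1) ^ 3) - 1) := by
  have h := (hasSum_nat_add_iff' (f := fun n : ℕ => 1 / ((n:ℝ)) ^ 3) 2).mpr summable3.hasSum
  have : (∑ i ∈ Finset.range 2, 1 / ((i:ℝ)) ^ 3) = 1 := by norm_num [Finset.sum_range_succ]
  rw [this, tsum3] at h
  refine h.congr_fun fun n => ?_
  push_cast
  ring_nf

lemma csum : HasSum (fun n : ℕ => ((n:ℝ)+1) * (2 / ((n:ℝ)+2) ^ 3))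
    (π ^ 2 / 3 - 2 * ∑' k : ℕ, 1 / ((k : ℝ) + 1) ^ 3) := by
  have h := (hz2.mul_left 2).sub (hz3.mul_left 2)
  have e : (2 * (π ^ 2 / 6 - 1) - 2 * ((∑' k : ℕ, 1 / ((k : ℝ) + 1) ^ 3) - 1))
      = π ^ 2 / 3 - 2 * ∑' k : ℕ, 1 / ((k : ℝ) + 1) ^ 3 := by ring
  rw [e] at h
  refine h.congr_fun fun n => ?_
  have hd : ((n:ℝ)+2) ≠ 0 := by positivity
  field_simp
  ring

end IntegralSqAux

theorem integral_sq_of_x_div_exp_sub_one :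
    ∫ x in Set.Ioi (0 : ℝ), (x / (Real.exp x - 1)) ^ 2 =
      π ^ 2 / 3 - 2 * ∑' k : ℕ, 1 / ((k : ℝ) + 1) ^ 3 := by
  open IntegralSqAux in
  set f : ℕ → ℝ → ℝ := fun n x => ((n:ℝ)+1) * (x ^ 2 * Real.exp (-(((n:ℝ)+2) * x))) with hf
  have hmeas : ∀ n, AEStronglyMeasurable (f n) (volume.restrict (Set.Ioi 0)) :=
    fun n => (intgr n).aestronglyMeasurable
  have hnn : ∀ n, 0 ≤ᵐ[volume.restrict (Set.Ioi (0:ℝ))] f n := by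
    intro n
    refine (ae_restrict_iff' measurableSet_Ioi).mpr (Filter.Eventually.of_forall fun x hx => ?_)
    have : (0:ℝ) < x := hx
    positivity
  have hlin : ∀ n, ∫⁻ x in Set.Ioi (0:ℝ), ‖f n x‖₊ ∂volume
      = ENNReal.ofReal (((n:ℝ)+1) * (2 / ((n:ℝ)+2) ^ 3)) := by
    intro n
    rw [← per_term n, MeasureTheory.ofReal_integral_eq_lintegral_ofReal (intgr n) (hnn n)]
    refine lintegral_congr_ae ?_
    filter_upwards [hnn n] with x hx
    rw [← Real.enorm_eq_ofReal hx]
    exact (enorm_eq_nnnorm _).symm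
  have hfin : (∑' n, ∫⁻ x in Set.Ioi (0:ℝ), ‖f n x‖₊ ∂volume) ≠ ⊤ := by
    simp_rw [hlin]
    rw [← ENNReal.ofReal_tsum_of_nonneg (fun n => by positivity) csum.summable]
    exact ENNReal.ofReal_ne_top
  have hswap := MeasureTheory.integral_tsum hmeas hfin
  have hL : ∫ x in Set.Ioi (0:ℝ), (x / (Real.exp x - 1)) ^ 2
      = ∫ x in Set.Ioi (0:ℝ), ∑' n, f n x := by
    refine setIntegral_congr_fun measurableSet_Ioi fun x hx => ?_
    exact ((ptwise hx).tsum_eq).symm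
  rw [hL, hswap]
  simp_rw [hf]
  rw [tsum_congr fun n => per_term n]
  exact csum.tsum_eq
end
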